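/- Let G and G' be finite strategic games sharing players I_G ∩ I_{G'} ≠ ∅, with strictly positive payoffs. In the combined game G + G', where each shared player i has strategy set S_i^G × S_i^{G'} and payoff equal to the product π_i^G(s) · π_i^{G'}(s'), non-shared players keep their original strategy sets and payoffs, then: a profile is a Nash equilibrium of G + G' if and only if its G-component is a Nash equilibrium of G and its G'-component is a Nash equilibrium of G'. -/

import Mathlib

/-- Pure Nash equilibrium of the game with players `I`, strategy sets `S`, and
payoffs `π` (only deviations by players in `I` matter). -/
def IsNashOn {P : Type} [DecidableEq P] (I : Finset P) (S : P → Type)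
    (π : P → (∀ p, S p) → ℝ) (s : ∀ p, S p) : Prop :=
  ∀ i ∈ I, ∀ a : S i, π i (Function.update s i a) ≤ π i s

/-- Pure Nash equilibrium of the combined game `G + G'` over player set
`I ∪ J`, where a shared player `i ∈ I ∩ J` chooses a pair of strategies and her
payoff is the product `π_i^G(s) · π_i^{G'}(s')`, while non-shared players keep
their original strategy sets and payoffs. -/
def IsNashCombProd {P : Type} [DecidableEq P] (I J : Finset P)
    (S T : P → Type) (π : P → (∀ p, S p) → ℝ) (π' : P → (∀ p, T p) → ℝ)
    (st : (∀ p, S p) × (∀ p, T p)) : Prop :=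
  (∀ i ∈ I, i ∉ J → ∀ a : S i, π i (Function.update st.1 i a) ≤ π i st.1) ∧
  (∀ j ∈ J, j ∉ I → ∀ b : T j, π' j (Function.update st.2 j b) ≤ π' j st.2) ∧
  (∀ i ∈ I, i ∈ J → ∀ (a : S i) (b : T i),
      π i (Function.update st.1 i a) * π' i (Function.update st.2 i b) ≤
        π i st.1 * π' i st.2)

theorem forall_mul_le_mul_iff {α β R : Type*} [Semiring R] [LinearOrder R]
    [IsStrictOrderedRing R] {f : α → R} {g : β → R} (hf : ∀ a, 0 < f a) (hg : ∀ b, 0 < g b)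
    (x : α) (y : β) :
    (∀ a b, f a * g b ≤ f x * g y) ↔ (∀ a, f a ≤ f x) ∧ ∀ b, g b ≤ g y where
  mp h := ⟨fun a ↦ le_of_mul_le_mul_right (h a y) (hg y),
    fun b ↦ le_of_mul_le_mul_left (h x b) (hf x)⟩
  mpr h a b := mul_le_mul (h.1 a) (h.2 b) (hg b).le (hf x).le

theorem isNashOn_iff_forall_notMem_and_forall_mem {P : Type} [DecidableEq P] {I : Finset P}
    (J : Finset P) {S : P → Type} {π : P → (∀ p, S p) → ℝ} {s : ∀ p, S p} :
    IsNashOn I S π s ↔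
      (∀ i ∈ I, i ∉ J → ∀ a : S i, π i (Function.update s i a) ≤ π i s) ∧
        ∀ i ∈ I, i ∈ J → ∀ a : S i, π i (Function.update s i a) ≤ π i s := by
  unfold IsNashOn
  grind

theorem nash_combined_product_general
    {P : Type} [DecidableEq P] (I J : Finset P)
    (S T : P → Type)
    (π : P → (∀ p, S p) → ℝ) (π' : P → (∀ p, T p) → ℝ)
    (hpos : ∀ i ∈ I, ∀ s, 0 < π i s) (hpos' : ∀ j ∈ J, ∀ t, 0 < π' j t)
    (st : (∀ p, S p) × (∀ p, T p)) :
    IsNashCombProd I J S T π π' st ↔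
      IsNashOn I S π st.1 ∧ IsNashOn J T π' st.2 := by
  have hproduct : ∀ i ∈ I, i ∈ J →
      ((∀ a b, π i (Function.update st.1 i a) * π' i (Function.update st.2 i b) ≤
          π i st.1 * π' i st.2) ↔
        (∀ a, π i (Function.update st.1 i a) ≤ π i st.1) ∧
          ∀ b, π' i (Function.update st.2 i b) ≤ π' i st.2) := fun i hi hiJ ↦ by
    simpa only [Function.update_eq_self] using
      forall_mul_le_mul_iff (f := fun a ↦ π i (Function.update st.1 i a))
        (g := fun b ↦ π' i (Function.update st.2 i b)) (fun _ ↦ hpos i hi _)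
        (fun _ ↦ hpos' i hiJ _) (st.1 i) (st.2 i)
  rw [isNashOn_iff_forall_notMem_and_forall_mem J,
    isNashOn_iff_forall_notMem_and_forall_mem I (s := st.2)]
  unfold IsNashCombProd
  grind

/-- for finite games with strictly positive payoffs sharing
players, a profile of the combined game `G + G'` (product payoffs for shared
players) is a Nash equilibrium iff its `G`-component is a Nash equilibrium of
`G` and its `G'`-component is a Nash equilibrium of `G'`. -/
theorem nash_combined_product
    {P : Type} [Fintype P] [DecidableEq P] (I J : Finset P)
    (hshared : (I ∩ J).Nonempty)
    (S T : P → Type) [∀ p, Fintype (S p)] [∀ p, Fintype (T p)]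
    (π : P → (∀ p, S p) → ℝ) (π' : P → (∀ p, T p) → ℝ)
    (hpos : ∀ i ∈ I, ∀ s, 0 < π i s) (hpos' : ∀ j ∈ J, ∀ t, 0 < π' j t)
    (hloc : ∀ i ∈ I, ∀ s s' : ∀ p, S p, (∀ j ∈ I, s j = s' j) → π i s = π i s')
    (hloc' : ∀ i ∈ J, ∀ t t' : ∀ p, T p, (∀ j ∈ J, t j = t' j) → π' i t = π' i t')
    (st : (∀ p, S p) × (∀ p, T p)) :
    IsNashCombProd I J S T π π' st ↔
      IsNashOn I S π st.1 ∧ IsNashOn J T π' st.2 :=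
  nash_combined_product_general I J S T π π' hpos hpos' st
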